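/- arXiv:2003.08222 — 2 statements merged into one kernel-verified Lean document; each statement's English description precedes it below -/
import Mathlib

section
/- For column vectors e ∈ ℝⁿ, a ∈ ℝᵐ, and any integer k ≥ 2, |D(eaᵀ)^k| ⪯ ‖e‖^{k−2}‖a‖^{k−2} · blockdiag(‖a‖²·eeᵀ, ‖e‖²·aaᵀ), where |M| denotes the matrix obtained from the eigendecomposition of the symmetric matrix M by taking absolute values of eigenvalues, and ⪯ denotes the positive-semidefinite (Loewner) order. -/
open Matrix Polynomial

private lemma vmv_mul {p q r : Type*} [Fintype q] (u : p → ℝ) (v : q → ℝ) (w : r → ℝ) :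
    vecMulVec u v * vecMulVec v w = (∑ j, v j ^ 2) • vecMulVec u w := by
  ext i j
  simp only [Matrix.mul_apply, Matrix.vecMulVec_apply, Matrix.smul_apply, smul_eq_mul]
  rw [Finset.sum_mul]
  exact Finset.sum_congr rfl fun l _ => by ring

/-- For column vectors `e ∈ ℝⁿ`, `a ∈ ℝᵐ` and any integer `k ≥ 2`,
`|D(eaᵀ)^k| ⪯ ‖e‖^(k−2)‖a‖^(k−2) · blockdiag(‖a‖²eeᵀ, ‖e‖²aaᵀ)`, where `D(eaᵀ)` is the
symmetric dilation `[[0, eaᵀ],[aeᵀ, 0]]`, `|M|` is obtained from the eigendecomposition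
of the symmetric matrix `M` by taking absolute values of the eigenvalues (here expressed
via the continuous functional calculus), and `⪯` is the Loewner order. -/
theorem rank_one_dilation_power_bound (n m : ℕ)
    (e : Fin n → ℝ) (a : Fin m → ℝ) (k : ℕ) (hk : 2 ≤ k) :
    let ne : ℝ := Real.sqrt (∑ i, e i ^ 2)
    let na : ℝ := Real.sqrt (∑ j, a j ^ 2)
    let D : Matrix (Fin n ⊕ Fin m) (Fin n ⊕ Fin m) ℝ :=
      Matrix.fromBlocks 0 (Matrix.vecMulVec e a) (Matrix.vecMulVec a e) 0
    ((ne ^ (k - 2) * na ^ (k - 2)) •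
        Matrix.fromBlocks ((∑ j, a j ^ 2) • Matrix.vecMulVec e e) 0
          0 ((∑ i, e i ^ 2) • Matrix.vecMulVec a a)
      - cfc (fun x : ℝ => |x|) (D ^ k)).PosSemidef := by
  intro ne na D
  rcases subsingleton_or_nontrivial (Matrix (Fin n ⊕ Fin m) (Fin n ⊕ Fin m) ℝ) with hS | hS
  · have h0 : ∀ M : Matrix (Fin n ⊕ Fin m) (Fin n ⊕ Fin m) ℝ, M.PosSemidef := by
      intro M
      rw [Subsingleton.elim M 0]
      exact Matrix.PosSemidef.zero
    exact h0 _
  set se : ℝ := ∑ i, e i ^ 2 with hse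
  set sa : ℝ := ∑ j, a j ^ 2 with hsa
  have hse0 : 0 ≤ se := Finset.sum_nonneg fun i _ => sq_nonneg _
  have hsa0 : 0 ≤ sa := Finset.sum_nonneg fun j _ => sq_nonneg _
  have hne2 : ne ^ 2 = se := Real.sq_sqrt hse0
  have hna2 : na ^ 2 = sa := Real.sq_sqrt hsa0
  have hD_def : D = Matrix.fromBlocks 0 (Matrix.vecMulVec e a) (Matrix.vecMulVec a e) 0 := rfl
  -- D is self-adjoint
  have hvt : ∀ {p q : Type} (u : p → ℝ) (v : q → ℝ),
      (Matrix.vecMulVec u v)ᴴ = Matrix.vecMulVec v u := by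
    intro p q u v
    ext i j
    simp [Matrix.vecMulVec_apply, Matrix.conjTranspose_apply, mul_comm]
  have hDsa : IsSelfAdjoint D := by
    show Dᴴ = D
    rw [hD_def, Matrix.fromBlocks_conjTranspose, hvt, hvt]
    simp
  have hAsa : IsSelfAdjoint (D ^ k) := hDsa.pow k
  -- powers of D
  have hD2 : D ^ 2 = Matrix.fromBlocks (sa • Matrix.vecMulVec e e) 0 0
      (se • Matrix.vecMulVec a a) := by
    rw [pow_two, hD_def, Matrix.fromBlocks_multiply]
    simp [vmv_mul, hse, hsa]
  have hD3 : D ^ 3 = (sa * se) • D := by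
    rw [pow_succ, hD2, hD_def, Matrix.fromBlocks_multiply]
    simp only [Matrix.mul_zero, Matrix.zero_mul, zero_add, add_zero,
      Matrix.smul_mul, vmv_mul, ← hse, ← hsa, smul_smul, Matrix.fromBlocks_smul,
      smul_zero]
    rw [mul_comm se sa]
  have hpow : ∀ j s : ℕ, D ^ (s + 1 + 2 * j) = (sa * se) ^ j • D ^ (s + 1) := by
    intro j
    induction j with
    | zero => intro s; simp
    | succ j ih =>
      intro s
      have h1 : s + 1 + 2 * (j + 1) = (s + 2) + 1 + 2 * j := by ring
      have h2 : D ^ (s + 2 + 1) = (sa * se) • D ^ (s + 1) := by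
        rw [show s + 2 + 1 = s + 3 from rfl, pow_add, hD3, Matrix.mul_smul, ← pow_succ]
      rw [h1, ih (s + 2), h2, smul_smul, ← pow_succ]
  have hD2k : D ^ (2 * k) = (sa * se) ^ (k - 1) • D ^ 2 := by
    have h1 : 2 * k = 1 + 1 + 2 * (k - 1) := by omega
    rw [h1, hpow]
  have hD3k : (D ^ k) ^ 3 = ((sa * se) ^ k) • D ^ k := by
    rw [← pow_mul]
    have h1 : k * 3 = (k - 1) + 1 + 2 * k := by omega
    rw [h1, hpow, show k - 1 + 1 = k by omega]
  -- degenerate case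
  by_cases hdeg : se = 0 ∨ sa = 0
  · have hDz : D = 0 := by
      have key : Matrix.vecMulVec e a = 0 ∧ Matrix.vecMulVec a e = 0 := by
        rcases hdeg with h | h
        · have : ∀ i, e i = 0 := by
            intro i
            have := (Finset.sum_eq_zero_iff_of_nonneg (fun i _ => sq_nonneg (e i))).mp h i
              (Finset.mem_univ i)
            exact pow_eq_zero_iff (two_ne_zero) |>.mp this
          constructor <;> (ext i j; simp [Matrix.vecMulVec_apply, this])
        · have : ∀ j, a j = 0 := by
            intro j
            have := (Finset.sum_eq_zero_iff_of_nonneg (fun j _ => sq_nonneg (a j))).mp h j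
              (Finset.mem_univ j)
            exact pow_eq_zero_iff (two_ne_zero) |>.mp this
          constructor <;> (ext i j; simp [Matrix.vecMulVec_apply, this])
      rw [hD_def, key.1, key.2]
      simp
    have hDk : D ^ k = 0 := by rw [hDz]; exact zero_pow (by omega)
    have hcfc : cfc (fun x : ℝ => |x|) (D ^ k) = 0 := by
      rw [hDk]
      have : cfc (fun x : ℝ => |x|) (0 : Matrix (Fin n ⊕ Fin m) (Fin n ⊕ Fin m) ℝ) =
          cfc (fun x : ℝ => x) (0 : Matrix (Fin n ⊕ Fin m) (Fin n ⊕ Fin m) ℝ) := by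
        apply cfc_congr
        intro x hx
        rw [spectrum.zero_eq] at hx
        simp only [Set.mem_singleton_iff] at hx
        simp [hx]
      rw [this, cfc_id' ℝ (0 : Matrix (Fin n ⊕ Fin m) (Fin n ⊕ Fin m) ℝ)
        (IsSelfAdjoint.zero _)]
    have hMz : Matrix.fromBlocks (sa • Matrix.vecMulVec e e) 0 0
        (se • Matrix.vecMulVec a a) = 0 := by
      rcases hdeg with h | h
      · have he0 : ∀ i, e i = 0 := by
          intro i
          have := (Finset.sum_eq_zero_iff_of_nonneg (fun i _ => sq_nonneg (e i))).mp h i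
            (Finset.mem_univ i)
          exact pow_eq_zero_iff (two_ne_zero) |>.mp this
        have : Matrix.vecMulVec e e = 0 := by ext i j; simp [Matrix.vecMulVec_apply, he0]
        rw [this, h]
        simp
      · have ha0 : ∀ j, a j = 0 := by
          intro j
          have := (Finset.sum_eq_zero_iff_of_nonneg (fun j _ => sq_nonneg (a j))).mp h j
            (Finset.mem_univ j)
          exact pow_eq_zero_iff (two_ne_zero) |>.mp this
        have : Matrix.vecMulVec a a = 0 := by ext i j; simp [Matrix.vecMulVec_apply, ha0]
        rw [this, h]
        simp
    rw [hcfc, hMz]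
    simpa using Matrix.PosSemidef.zero
  -- main case
  push_neg at hdeg
  obtain ⟨hse', hsa'⟩ := hdeg
  have hsep : 0 < se := lt_of_le_of_ne hse0 (Ne.symm hse')
  have hsap : 0 < sa := lt_of_le_of_ne hsa0 (Ne.symm hsa')
  set c : ℝ := ne * na with hc
  have hcp : 0 < c := mul_pos (Real.sqrt_pos.mpr hsep) (Real.sqrt_pos.mpr hsap)
  have hc2 : c ^ 2 = sa * se := by rw [hc, mul_pow, hne2, hna2]; ring
  -- spectrum of D^k
  have hspec : ∀ x ∈ spectrum ℝ (D ^ k), x ^ 3 = (sa * se) ^ k * x := by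
    intro x hx
    set p : ℝ[X] := X ^ 3 - C ((sa * se) ^ k) * X with hp
    have hae : (aeval (D ^ k)) p = 0 := by
      have h0 : (D ^ k) ^ 3 -
          algebraMap ℝ (Matrix (Fin n ⊕ Fin m) (Fin n ⊕ Fin m) ℝ) ((sa * se) ^ k) * (D ^ k)
            = 0 := by
        rw [← Algebra.smul_def, hD3k, sub_self]
      simp only [hp, map_sub, _root_.map_mul, map_pow, aeval_X, aeval_C] at h0 ⊢
      exact h0
    have hmem : p.eval x ∈ spectrum ℝ ((aeval (D ^ k)) p) :=
      spectrum.subset_polynomial_aeval (D ^ k) p ⟨x, hx, rfl⟩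
    rw [hae, spectrum.zero_eq] at hmem
    simp only [Set.mem_singleton_iff, hp, eval_sub, eval_mul, eval_pow, eval_X, eval_C] at hmem
    linarith
  -- compute the cfc
  have hck : (0:ℝ) < c ^ k := pow_pos hcp k
  have heq1 : cfc (fun x : ℝ => |x|) (D ^ k) =
      cfc (fun x : ℝ => (c ^ k)⁻¹ * x ^ 2) (D ^ k) := by
    apply cfc_congr
    intro x hx
    show |x| = (c ^ k)⁻¹ * x ^ 2
    have h3 : x ^ 3 = (sa * se) ^ k * x := hspec x hx
    have hck2 : (sa * se) ^ k = (c ^ k) ^ 2 := by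
      rw [← pow_mul, mul_comm k 2, pow_mul, hc2]
    rw [hck2] at h3
    have hfac : x * (x ^ 2 - (c ^ k) ^ 2) = 0 := by ring_nf; ring_nf at h3; linarith
    rcases mul_eq_zero.mp hfac with h | h
    · simp [h]
    · have hx2 : x ^ 2 = (c ^ k) ^ 2 := by linarith
      have habs : |x| = c ^ k := by
        rcases abs_cases x with ⟨h1, _⟩ | ⟨h1, _⟩ <;> nlinarith
      rw [habs, hx2, pow_two, inv_mul_cancel_left₀ (ne_of_gt hck)]
  have heq2 : cfc (fun x : ℝ => (c ^ k)⁻¹ * x ^ 2) (D ^ k) = (c ^ k)⁻¹ • (D ^ k) ^ 2 := by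
    rw [cfc_const_mul ((c ^ k)⁻¹) (fun x : ℝ => x ^ 2) (D ^ k), cfc_pow_id (D ^ k)]
  have heq3 : (c ^ k)⁻¹ • (D ^ k) ^ 2 = c ^ (k - 2) • D ^ 2 := by
    rw [← pow_mul, mul_comm k 2, hD2k, smul_smul]
    congr 1
    have h1 : (sa * se) ^ (k - 1) = c ^ (2 * (k - 1)) := by rw [pow_mul, hc2]
    have h2 : c ^ (2 * (k - 1)) = c ^ k * c ^ (k - 2) := by
      rw [← pow_add]; congr 1; omega
    rw [h1, h2, inv_mul_cancel_left₀ (ne_of_gt hck)]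
  rw [heq1, heq2, heq3, ← hD2, ← mul_pow, ← hc, sub_self]
  exact Matrix.PosSemidef.zero
end

section
/- Let Θ ∈ {0,1}^{n×K} be a membership matrix (each row has exactly one 1) with community sizes n₁,…,n_K all at least c·n for some c > 0, write Θ = Θ̃Λ where Λ = diag(√n₁,…,√n_K) and Θ̃ has orthonormal columns. If B₁,…,B_L are symmetric K×K matrices with Σ_ℓ B_ℓ² ⪰ cL·I_K, then Σ_ℓ (ρΘB_ℓΘᵀ)² ⪰ c³·L·n²·ρ²·Θ̃Θ̃ᵀ as positive semidefinite matrices; in particular, the K-th largest eigenvalue of Σ_ℓ (ρΘB_ℓΘᵀ)² is at least c³Ln²ρ². -/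
/-!
Since `Θᵀ Θ = N := diag(n₁,…,n_K)`, the signal matrix is `ρ² Θ (∑_ℓ B_ℓ N B_ℓ) Θᵀ`, while
`Θ̃Θ̃ᵀ = Θ N⁻¹ Θᵀ`; as congruence by `Θ` preserves the Loewner order, it suffices to compare the
`K × K` matrices in the middle. There `N ⪰ cn·I` gives `∑_ℓ B_ℓ N B_ℓ ⪰ cn ∑_ℓ B_ℓ² ⪰ c²Ln·I`,
and `c²Ln ≥ c³Ln²/n_k` for every `k`.
-/

open Matrix

open scoped MatrixOrder

namespace Matrix

def membershipMatrix {ι κ : Type*} [DecidableEq κ] (R : Type*) [Zero R] [One R] (θ : ι → κ) :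
    Matrix ι κ R :=
  of fun i k => if θ i = k then 1 else 0

theorem membershipMatrix_transpose_mul_self {ι κ R : Type*} [Fintype ι] [DecidableEq κ]
    [NonAssocSemiring R] (θ : ι → κ) :
    (membershipMatrix R θ)ᵀ * membershipMatrix R θ =
      diagonal fun k => ((Finset.univ.filter fun i => θ i = k).card : R) := by
  ext k k'
  simp only [membershipMatrix, mul_apply, transpose_apply, of_apply, mul_ite, mul_one, mul_zero,
    diagonal_apply]
  split_ifs with h
  · subst h
    rw [← Finset.sum_boole]
    exact Finset.sum_congr rfl fun i _ => by split_ifs <;> rfl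
  · exact Finset.sum_eq_zero fun i _ => by grind

theorem sum_smul_conj_mul_smul_conj {m κ R : Type*} [Fintype m] [Fintype κ] [CommRing R] {L : ℕ}
    (A : Matrix m κ R) (B : Fin L → Matrix κ κ R) (ρ : R) :
    ∑ ℓ, (ρ • (A * B ℓ * Aᵀ)) * (ρ • (A * B ℓ * Aᵀ)) =
      ρ ^ 2 • (A * (∑ ℓ, B ℓ * (Aᵀ * A) * B ℓ) * Aᵀ) := by
  simp only [Matrix.mul_sum, Matrix.sum_mul, Finset.smul_sum, smul_mul_smul_comm, sq,
    Matrix.mul_assoc]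

theorem mul_diagonal_inv_sqrt_mul_transpose {m κ : Type*} [Fintype κ] [DecidableEq κ]
    (A : Matrix m κ ℝ) {d : κ → ℝ} (hd : ∀ k, 0 ≤ d k) :
    A * diagonal (fun k => (√(d k))⁻¹) * (A * diagonal fun k => (√(d k))⁻¹)ᵀ =
      A * diagonal d⁻¹ * Aᵀ := by
  rw [transpose_mul, diagonal_transpose, Matrix.mul_assoc, ← Matrix.mul_assoc (diagonal _),
    diagonal_mul_diagonal, ← Matrix.mul_assoc]
  congr 3
  funext k
  rw [← mul_inv, Real.mul_self_sqrt (hd k), Pi.inv_apply]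

theorem diagonal_le_diagonal {κ : Type*} [DecidableEq κ] {d e : κ → ℝ} (h : ∀ k, d k ≤ e k) :
    diagonal d ≤ diagonal e := by
  rw [le_iff, diagonal_sub, posSemidef_diagonal_iff]
  exact fun k => sub_nonneg.mpr (h k)

theorem mul_mul_transpose_le_mul_mul_transpose {m κ : Type*} [Fintype m] [Fintype κ]
    {A B : Matrix κ κ ℝ} (h : A ≤ B) (C : Matrix m κ ℝ) : C * A * Cᵀ ≤ C * B * Cᵀ := by
  rw [le_iff, ← Matrix.sub_mul, ← Matrix.mul_sub, ← conjTranspose_eq_transpose_of_trivial]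
  exact (le_iff.mp h).mul_mul_conjTranspose_same C

theorem smul_diagonal_inv_le_sum_mul_diagonal_mul {κ : Type*} [Fintype κ] [DecidableEq κ]
    {L : ℕ} {B : Fin L → Matrix κ κ ℝ} (hB : ∀ ℓ, (B ℓ).IsSymm) {a b : ℝ} {d : κ → ℝ}
    (ha : 0 ≤ a) (hb : 0 ≤ b) (hd : ∀ k, a ≤ d k) (hBlow : b • 1 ≤ ∑ ℓ, B ℓ * B ℓ) :
    (a ^ 2 * b) • diagonal d⁻¹ ≤ ∑ ℓ, B ℓ * diagonal d * B ℓ := calc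
  (a ^ 2 * b) • diagonal d⁻¹ ≤ (a * b) • (1 : Matrix κ κ ℝ) := by
    rw [← diagonal_one, ← diagonal_smul, ← diagonal_smul]
    refine diagonal_le_diagonal fun k => ?_
    simp only [Pi.smul_apply, Pi.inv_apply, smul_eq_mul, mul_one]
    calc a ^ 2 * b * (d k)⁻¹ = a * b * (a * (d k)⁻¹) := by ring
      _ ≤ a * b * 1 := by gcongr; exact mul_inv_le_one_of_le₀ (hd k) (ha.trans (hd k))
      _ = a * b := mul_one _
  _ ≤ a • ∑ ℓ, B ℓ * B ℓ := by
    rw [mul_smul]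
    exact smul_le_smul_of_nonneg_left hBlow ha
  _ ≤ ∑ ℓ, B ℓ * diagonal d * B ℓ := by
    rw [Finset.smul_sum]
    refine Finset.sum_le_sum fun ℓ _ => ?_
    have hBℓ : IsSelfAdjoint (B ℓ) := (isHermitian_iff_isSymm.mpr (hB ℓ)).isSelfAdjoint
    have := hBℓ.conjugate_le_conjugate (diagonal_le_diagonal (d := fun _ => a) hd)
    rwa [← smul_one_eq_diagonal, Matrix.mul_smul, Matrix.mul_one, Matrix.smul_mul] at this

end Matrix

theorem signal_lower_bound_general (n K L : ℕ) (θ : Fin n → Fin K) (c ρ : ℝ)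
    (hc : 0 < c)
    (hsize : ∀ k, c * n ≤ ((Finset.univ.filter (fun i => θ i = k)).card : ℝ))
    (B : Fin L → Matrix (Fin K) (Fin K) ℝ)
    (hBsymm : ∀ ℓ, (B ℓ).IsSymm)
    (hBlow : ((∑ ℓ, B ℓ * B ℓ) - (c * L) • (1 : Matrix (Fin K) (Fin K) ℝ)).PosSemidef) :
    let Θ : Matrix (Fin n) (Fin K) ℝ := Matrix.of fun i k => if θ i = k then 1 else 0
    let Θtil : Matrix (Fin n) (Fin K) ℝ :=
      Θ * Matrix.diagonal (fun k =>
        (Real.sqrt ((Finset.univ.filter (fun i => θ i = k)).card : ℝ))⁻¹)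
    ((∑ ℓ, (ρ • (Θ * B ℓ * Θᵀ)) * (ρ • (Θ * B ℓ * Θᵀ)))
      - (c ^ 3 * L * n ^ 2 * ρ ^ 2) • (Θtil * Θtilᵀ)).PosSemidef := by
  intro Θ Θtil
  set N : Fin K → ℝ := fun k => ((Finset.univ.filter fun i => θ i = k).card : ℝ)
  have hgram : Θᵀ * Θ = diagonal N := membershipMatrix_transpose_mul_self θ
  have hproj : Θtil * Θtilᵀ = Θ * diagonal N⁻¹ * Θᵀ :=
    mul_diagonal_inv_sqrt_mul_transpose Θ fun k => Nat.cast_nonneg _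
  have hcore : ((c * n) ^ 2 * (c * L)) • diagonal N⁻¹ ≤ ∑ ℓ, B ℓ * diagonal N * B ℓ :=
    smul_diagonal_inv_le_sum_mul_diagonal_mul hBsymm (by positivity) (by positivity) hsize hBlow
  rw [sum_smul_conj_mul_smul_conj, hgram, hproj, ← le_iff]
  calc (c ^ 3 * L * n ^ 2 * ρ ^ 2) • (Θ * diagonal N⁻¹ * Θᵀ)
      = ρ ^ 2 • (Θ * (((c * n) ^ 2 * (c * L)) • diagonal N⁻¹) * Θᵀ) := by
        rw [Matrix.mul_smul, Matrix.smul_mul, smul_smul]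
        ring_nf
    _ ≤ ρ ^ 2 • (Θ * (∑ ℓ, B ℓ * diagonal N * B ℓ) * Θᵀ) :=
        smul_le_smul_of_nonneg_left (mul_mul_transpose_le_mul_mul_transpose hcore Θ) (sq_nonneg ρ)

/-- Let `Θ ∈ {0,1}^{n×K}` be a membership matrix (given by an assignment `θ`) whose
community sizes are all at least `c·n` for some `c > 0`, and write `Θ = Θ̃Λ` where
`Λ = diag(√n₁,…,√n_K)`, so `Θ̃ = ΘΛ⁻¹` has orthonormal columns. If `B₁,…,B_L` are
symmetric `K×K` matrices with `∑_ℓ B_ℓ² ⪰ cL·I_K`, then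
`∑_ℓ (ρΘB_ℓΘᵀ)² ⪰ c³Ln²ρ²·Θ̃Θ̃ᵀ` in the Loewner order; in particular the `K`-th largest
eigenvalue of `∑_ℓ (ρΘB_ℓΘᵀ)²` is at least `c³Ln²ρ²`. -/
theorem signal_lower_bound (n K L : ℕ) (θ : Fin n → Fin K) (c ρ : ℝ)
    (hc : 0 < c) (hρ : 0 < ρ)
    (hsize : ∀ k, c * n ≤ ((Finset.univ.filter (fun i => θ i = k)).card : ℝ))
    (B : Fin L → Matrix (Fin K) (Fin K) ℝ)
    (hBsymm : ∀ ℓ, (B ℓ).IsSymm)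
    (hBlow : ((∑ ℓ, B ℓ * B ℓ) - (c * L) • (1 : Matrix (Fin K) (Fin K) ℝ)).PosSemidef) :
    let Θ : Matrix (Fin n) (Fin K) ℝ := Matrix.of fun i k => if θ i = k then 1 else 0
    let Θtil : Matrix (Fin n) (Fin K) ℝ :=
      Θ * Matrix.diagonal (fun k =>
        (Real.sqrt ((Finset.univ.filter (fun i => θ i = k)).card : ℝ))⁻¹)
    ((∑ ℓ, (ρ • (Θ * B ℓ * Θᵀ)) * (ρ • (Θ * B ℓ * Θᵀ)))
      - (c ^ 3 * L * n ^ 2 * ρ ^ 2) • (Θtil * Θtilᵀ)).PosSemidef :=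
  signal_lower_bound_general n K L θ c ρ hc hsize B hBsymm hBlow
end
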